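/- Let k ≥ 2 be an integer and let a : ℕ₀ → ℂ be a multiplicative k-automatic sequence such that there exists a threshold p₀ with a(p^α) ≠ 0 for every prime p ≥ p₀ and every α ∈ ℕ. Then there exists a threshold p₂ such that for every prime p ≥ p₂ and every α ∈ ℕ one has a(p^α) = a(p)^α ≠ 0. -/

import Mathlib

open scoped BigOperators

namespace MultAuto

/-- Base-`k` value of a word over `Σ_k` (most significant digit first); `[ε]_k = 0`. -/
def valk (k : ℕ) (u : List ℕ) : ℕ := u.foldl (fun acc d => k * acc + d) 0

/-- `u` is a word over the alphabet `Σ_k = {0,…,k-1}`. -/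
def IsWord (k : ℕ) (u : List ℕ) : Prop := ∀ d ∈ u, d < k

/-- `u` has no leading zeros (the empty word qualifies). -/
def NoLeadZero : List ℕ → Prop
  | [] => True
  | d :: _ => d ≠ 0

/-- `wpow v l` is the `l`-fold concatenation `v^l`. -/
def wpow (v : List ℕ) (l : ℕ) : List ℕ := (List.replicate l v).flatten

/-- Transition function of a word: `δ_{uv} = δ_u ∘ δ_v`. -/
def deltaW {S : Type*} (δ : ℕ → S → S) : List ℕ → S → S
  | [] => id
  | d :: t => δ d ∘ deltaW δ t

/-- `a : ℕ → ℂ` is a `k`-automatic sequence. -/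
def IsAutomatic (k : ℕ) (a : ℕ → ℂ) : Prop :=
  ∃ (S : Type) (_ : Fintype S) (s₀ : S) (δ : ℕ → S → S) (τ : S → ℂ),
    ∀ u : List ℕ, IsWord k u → NoLeadZero u → a (valk k u) = τ (deltaW δ u s₀)

/-- `a` is multiplicative: `a (m n) = a m * a n` for coprime positive `m, n`. -/
def IsMult (a : ℕ → ℂ) : Prop :=
  ∀ m n : ℕ, 0 < m → 0 < n → Nat.Coprime m n → a (m * n) = a m * a n

/-- The word `u_r v_r^{l_r} u_{r-1} ⋯ u_1 v_1^{l_1} u_0`. -/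
def aridWord (u v : ℕ → List ℕ) (l : ℕ → ℕ) : ℕ → List ℕ
  | 0 => u 0
  | r + 1 => u (r + 1) ++ wpow (v (r + 1)) (l (r + 1)) ++ aridWord u v l r

/-- `A` is a basic arid set of rank ≤ r in base k. -/
def BasicArid (k r : ℕ) (A : Set ℕ) : Prop :=
  ∃ u v : ℕ → List ℕ, (∀ i, IsWord k (u i)) ∧ (∀ i, IsWord k (v i)) ∧
    A = {n | ∃ l : ℕ → ℕ, n = valk k (aridWord u v l r)}

/-- `A` is an arid set of rank ≤ r: a finite union of basic arid sets of rank ≤ r. -/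
def AridOfRank (k r : ℕ) (A : Set ℕ) : Prop :=
  ∃ (m : ℕ) (B : Fin m → Set ℕ), (∀ j, BasicArid k r (B j)) ∧ A = ⋃ j, B j

/-- `A` is arid (in base `k`). -/
def Arid (k : ℕ) (A : Set ℕ) : Prop := ∃ r, AridOfRank k r A

/-- `χ : ℕ → ℂ` is a Dirichlet character of modulus `m`: completely multiplicative,
`m`-periodic, and nonvanishing exactly at integers coprime to `m`. -/
def IsDirichletLike (m : ℕ) (χ : ℕ → ℂ) : Prop :=
  0 < m ∧ (∀ a b : ℕ, 0 < a → 0 < b → χ (a * b) = χ a * χ b) ∧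
  (∀ n : ℕ, 0 < n → χ (n + m) = χ n) ∧
  (∀ n : ℕ, 0 < n → (χ n ≠ 0 ↔ Nat.Coprime n m))

/-- `(n)_k^l`: the last `l` base-`k` digits of `n`, padded with leading zeros,
most significant digit first. -/
def padk (k l n : ℕ) : List ℕ := (List.range l).reverse.map fun i => n / k ^ i % k

/-- The equivalence `n₁ ∼ n₂` on `ℕ` induced by the transition maps `δ`. -/
def EqvN (k : ℕ) {S : Type*} (δ : ℕ → S → S) (n₁ n₂ : ℕ) : Prop :=
  ∃ l₀ : ℕ, ∀ l ≥ l₀, deltaW δ (padk k l n₁) = deltaW δ (padk k l n₂)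

/-- `E ⊆ ℕ` has upper Banach density zero. -/
def UpperBanachDensityZero (E : Set ℕ) : Prop :=
  ∀ ε : ℝ, 0 < ε → ∃ N₀ : ℕ, ∀ N ≥ N₀, ∀ M : ℕ,
    ((E ∩ Set.Ico M (M + N)).ncard : ℝ) ≤ ε * N

/-!
For `b = k ^ e`, the number `repunit b n = ∑_{i<n} b ^ i` is written `1 (0^(e-1) 1)^(n-1)` in
base `k`, so reading it the automaton iterates one fixed self-map of a finite set; hence
`a (repunit b n)` depends only on `n` and `e` modulo `T = |S|!` once they exceed `|S|`.
Take `e = p - 1` for a large prime `p`, so that `b ≡ 1 [MOD p]`. Then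
`repunit b (q * p) = repunit b q * repunit (b ^ q) p` with coprime factors when `p ∤ q`, and
`q = p ^ β + T` is indistinguishable from `p ^ β` for the automaton, which gives
`a (repunit b (p ^ (β + 1))) = a (repunit b (p ^ β)) * a (repunit (b ^ p ^ β) p)`.
By lifting the exponent, `repunit b (p ^ j)` is `p ^ j` times a number prime to `p`, and all its
prime factors are at least `p`; so multiplicativity splits off the nonzero `p`-free parts, and
cancelling them leaves `a (p ^ (β + 1)) = a (p ^ β) * a p`.
-/

def repunit (b n : ℕ) : ℕ := ∑ i ∈ Finset.range n, b ^ i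

lemma repunit_pos {b n : ℕ} (hn : 0 < n) : 0 < repunit b n :=
  Finset.sum_pos' (fun _ _ => Nat.zero_le _) ⟨0, Finset.mem_range.2 hn, by simp⟩

lemma repunit_succ (b n : ℕ) : repunit b (n + 1) = b * repunit b n + 1 :=
  geom_sum_succ

lemma repunit_mul_sub_one (b n : ℕ) : repunit b n * (b - 1) = b ^ n - 1 := by
  rcases b with _ | c
  · simp [Nat.sub_eq_zero_of_le (pow_le_one₀ le_rfl zero_le_one)]
  · have h := geom_sum_mul_add c n
    rw [repunit, Nat.add_sub_cancel]
    omega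

lemma repunit_mul (b m n : ℕ) : repunit b (m * n) = repunit b m * repunit (b ^ m) n := by
  induction n with
  | zero => simp [repunit]
  | succ n ih =>
    have hshift : ∑ i ∈ Finset.range m, b ^ (m * n + i) = b ^ (m * n) * repunit b m := by
      simp only [pow_add, ← Finset.mul_sum, repunit]
    have hsucc : repunit (b ^ m) (n + 1) = repunit (b ^ m) n + (b ^ m) ^ n :=
      Finset.sum_range_succ _ _
    rw [Nat.mul_succ, repunit, Finset.sum_range_add, ← repunit, ih, hshift, hsucc, ← pow_mul]
    ring

lemma cast_repunit {R : Type*} [Semiring R] {b : ℕ} (hb : (b : R) = 1) (n : ℕ) :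
    (repunit b n : R) = n := by
  simp [repunit, hb]

lemma dvd_repunit_iff {b d : ℕ} (hb : b ≡ 1 [MOD d]) (n : ℕ) :
    d ∣ repunit b n ↔ d ∣ n := by
  have hb' : (b : ZMod d) = 1 := by simpa using (ZMod.natCast_eq_natCast_iff b 1 d).2 hb
  rw [← ZMod.natCast_eq_zero_iff, cast_repunit hb', ZMod.natCast_eq_zero_iff]

lemma pow_eq_one_of_dvd_repunit {b d m : ℕ} (hd : d ∣ repunit b m) : (b : ZMod d) ^ m = 1 := by
  have h := (ZMod.natCast_eq_zero_iff _ _).2 hd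
  simp only [repunit, Nat.cast_sum, Nat.cast_pow] at h
  rw [← sub_eq_zero, ← geom_sum_mul, h, zero_mul]

lemma coprime_repunit_pow {b d m n : ℕ} (hd : d ∣ repunit b m) (h : Nat.Coprime d n) :
    Nat.Coprime d (repunit (b ^ m) n) := by
  have hbm : ((b ^ m : ℕ) : ZMod d) = 1 := by push_cast; exact pow_eq_one_of_dvd_repunit hd
  rw [Nat.coprime_comm, ← ZMod.isUnit_iff_coprime, cast_repunit hbm, ZMod.isUnit_iff_coprime]
  exact h.symm

lemma dvd_of_prime_dvd_repunit {b q n : ℕ} (hq : q.Prime) (hdvd : q ∣ repunit b n)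
    (hn : Nat.Coprime n (q - 1)) : q ∣ n := by
  have : Fact q.Prime := ⟨hq⟩
  have hbn := pow_eq_one_of_dvd_repunit hdvd
  obtain rfl | hn0 := Nat.eq_zero_or_pos n
  · exact dvd_zero q
  by_cases hb0 : (b : ZMod q) = 0
  · rw [hb0, zero_pow hn0.ne'] at hbn
    exact absurd hbn zero_ne_one
  · have hb1 := pow_gcd_eq_one.2 ⟨hbn, ZMod.pow_card_sub_one_eq_one hb0⟩
    rw [hn, pow_one] at hb1
    rw [← ZMod.natCast_eq_zero_iff, ← cast_repunit hb1, ZMod.natCast_eq_zero_iff]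
    exact hdvd

lemma padicValNat_repunit {p b n : ℕ} [Fact p.Prime] (hp : Odd p) (hb : b ≡ 1 [MOD p])
    (hb1 : 1 < b) (hn : n ≠ 0) : padicValNat p (repunit b n) = padicValNat p n := by
  have hpb : p ∣ b - 1 := (Nat.modEq_iff_dvd' hb1.le).1 hb.symm
  have hpb' : ¬ p ∣ b := fun h => (Fact.out : p.Prime).not_dvd_one
    (by simpa [Nat.sub_sub_self hb1.le] using Nat.dvd_sub h hpb)
  have hlte := padicValNat.pow_sub_pow hp hb1 (by simpa using hpb) hpb' hn
  rw [one_pow, ← repunit_mul_sub_one, padicValNat.mul (repunit_pos (Nat.pos_of_ne_zero hn)).ne'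
    (by omega)] at hlte
  omega

lemma exists_repunit_prime_pow_eq_mul {p b : ℕ} (hp : p.Prime) (hodd : Odd p)
    (hb : b ≡ 1 [MOD p]) (hb1 : 1 < b) (j : ℕ) :
    ∃ x, repunit b (p ^ j) = p ^ j * x ∧ ¬ p ∣ x := by
  have : Fact p.Prime := ⟨hp⟩
  have hR : repunit b (p ^ j) ≠ 0 := (repunit_pos (pow_pos hp.pos j)).ne'
  have hv : (repunit b (p ^ j)).factorization p = j := by
    rw [Nat.factorization_def _ hp, padicValNat_repunit hodd hb hb1 (pow_ne_zero j hp.ne_zero),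
      padicValNat.prime_pow]
  have hsplit := Nat.ordProj_mul_ordCompl_eq_self (repunit b (p ^ j)) p
  have hpx := Nat.not_dvd_ordCompl hp hR
  rw [hv] at hsplit hpx
  exact ⟨_, hsplit.symm, hpx⟩

lemma le_of_prime_dvd_repunit_prime_pow {b p q j : ℕ} (hp : p.Prime) (hq : q.Prime)
    (h : q ∣ repunit b (p ^ j)) : p ≤ q := by
  by_contra! hqp
  have hcop : Nat.Coprime (p ^ j) (q - 1) :=
    (Nat.coprime_of_lt_prime (by have := hq.two_le; omega) (by omega) hp).pow_left j
  have hqp' := (Nat.prime_dvd_prime_iff_eq hq hp).1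
    (hq.dvd_of_dvd_pow (dvd_of_prime_dvd_repunit hq h hcop))
  omega

section Multiplicative

variable {a : ℕ → ℂ}

lemma IsMult.apply_ne_zero {p₀ : ℕ} (hmul : IsMult a) (h1 : a 1 ≠ 0)
    (hdense : ∀ q : ℕ, q.Prime → p₀ ≤ q → ∀ α : ℕ, 0 < α → a (q ^ α) ≠ 0)
    {n : ℕ} (hn : 0 < n) (hfac : ∀ q : ℕ, q.Prime → q ∣ n → p₀ ≤ q) : a n ≠ 0 := by
  induction n using Nat.recOnPosPrimePosCoprime with
  | prime_pow q α hq hα => exact hdense q hq (hfac q hq (dvd_pow_self q hα.ne')) α hα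
  | zero => exact absurd hn (lt_irrefl 0)
  | one => exact h1
  | coprime m n hm hn' hmn ihm ihn =>
    rw [hmul m n (by omega) (by omega) hmn]
    exact mul_ne_zero (ihm (by omega) fun q hq h => hfac q hq (h.mul_right n))
      (ihn (by omega) fun q hq h => hfac q hq (h.mul_left m))

lemma IsMult.apply_prime_pow_mul (hmul : IsMult a) {p x : ℕ} (hp : p.Prime) (hx : ¬ p ∣ x)
    (j : ℕ) : a (p ^ j * x) = a (p ^ j) * a x :=
  hmul _ _ (pow_pos hp.pos j) (Nat.pos_of_ne_zero fun h => hx (h ▸ dvd_zero p))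
    (((hp.coprime_iff_not_dvd).2 hx).pow_left j)

theorem IsMult.apply_prime_pow_succ {p₀ p b β : ℕ} (hmul : IsMult a) (h1 : a 1 ≠ 0)
    (hdense : ∀ q : ℕ, q.Prime → p₀ ≤ q → ∀ α : ℕ, 0 < α → a (q ^ α) ≠ 0)
    (hp : p.Prime) (hodd : Odd p) (hp₀ : p₀ ≤ p) (hb : b ≡ 1 [MOD p]) (hb1 : 1 < b)
    (hrep : a (repunit b (p ^ (β + 1))) = a (repunit b (p ^ β)) * a (repunit (b ^ p ^ β) p)) :
    a (p ^ (β + 1)) = a (p ^ β) * a p := by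
  obtain ⟨x, hX, hpx⟩ := exists_repunit_prime_pow_eq_mul hp hodd hb hb1 β
  obtain ⟨y, hY, hpy⟩ :=
    exists_repunit_prime_pow_eq_mul hp hodd (by simpa using hb.pow (p ^ β))
    (Nat.one_lt_pow (pow_ne_zero _ hp.ne_zero) hb1) 1
  rw [pow_one] at hY
  have hpy' : a (p * y) = a p * a y := by simpa using hmul.apply_prime_pow_mul hp hpy 1
  have hZ : repunit b (p ^ (β + 1)) = p ^ (β + 1) * (x * y) := by
    rw [pow_succ, repunit_mul, hX, hY]
    ring
  have hxy : Nat.Coprime x y :=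
    (coprime_repunit_pow (hX ▸ dvd_mul_left x _)
      ((hp.coprime_iff_not_dvd).2 hpx).symm).coprime_dvd_right (hY ▸ dvd_mul_left y p)
  have hdvd_ne_zero : ∀ m, m ∣ p ^ (β + 1) * (x * y) → a m ≠ 0 := fun m hm =>
    hmul.apply_ne_zero h1 hdense (Nat.pos_of_dvd_of_pos hm (hZ ▸ repunit_pos (pow_pos hp.pos _)))
      fun q hq hqm => hp₀.trans (le_of_prime_dvd_repunit_prime_pow hp hq (hZ ▸ hqm.trans hm))
  have hax : a x ≠ 0 := hdvd_ne_zero x ((dvd_mul_right x y).mul_left _)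
  have hay : a y ≠ 0 := hdvd_ne_zero y ((dvd_mul_left y x).mul_left _)
  apply mul_right_cancel₀ (mul_ne_zero hax hay)
  calc a (p ^ (β + 1)) * (a x * a y) = a (repunit b (p ^ (β + 1))) := by
        rw [hZ, hmul.apply_prime_pow_mul hp (Nat.Prime.not_dvd_mul hp hpx hpy),
          hmul x y (Nat.pos_of_ne_zero fun h => hpx (h ▸ dvd_zero p))
            (Nat.pos_of_ne_zero fun h => hpy (h ▸ dvd_zero p)) hxy]
    _ = a (repunit b (p ^ β)) * a (repunit (b ^ p ^ β) p) := hrep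
    _ = a (p ^ β) * a p * (a x * a y) := by
        rw [hX, hY, hmul.apply_prime_pow_mul hp hpx, hpy']
        ring

end Multiplicative

lemma _root_.Function.iterate_eq_iterate_of_modEq {α : Type*} [Fintype α] (f : α → α)
    {m n : ℕ} (hm : Fintype.card α ≤ m) (hn : Fintype.card α ≤ n)
    (h : m ≡ n [MOD (Fintype.card α).factorial]) : f^[m] = f^[n] := by
  set N := Fintype.card α
  funext x
  have hper : Function.IsPeriodicPt f N.factorial (f^[N] x) := by
    obtain ⟨i, j, hne, hij⟩ := Fintype.exists_ne_map_eq_of_card_lt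
      (fun i : Fin (N + 1) => f^[i] x) (by simp [N])
    wlog hlt : i < j generalizing i j
    · exact this j i hne.symm hij.symm (lt_of_le_of_ne (not_lt.1 hlt) hne.symm)
    have hi : Function.IsPeriodicPt f (j - i) (f^[i] x) := by
      rw [Function.IsPeriodicPt, Function.IsFixedPt, ← Function.iterate_add_apply,
        Nat.sub_add_cancel hlt.le, hij]
    have hmem := Function.mk_mem_periodicPts (Nat.sub_pos_of_lt hlt) (hi.apply_iterate (N - i))
    rw [← Function.iterate_add_apply, Nat.sub_add_cancel (Nat.lt_succ_iff.1 i.isLt)] at hmem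
    exact Function.isPeriodicPt_factorial_card_of_mem_periodicPts hmem
  have hmod : m - N ≡ n - N [MOD N.factorial] :=
    Nat.ModEq.add_right_cancel' N (by rwa [Nat.sub_add_cancel hm, Nat.sub_add_cancel hn])
  rw [← Nat.sub_add_cancel hm, ← Nat.sub_add_cancel hn, Function.iterate_add_apply,
    Function.iterate_add_apply, ← hper.iterate_mod_apply, ← hper.iterate_mod_apply (n - N),
    hmod]

lemma valk_eq_ofDigits (k : ℕ) (u : List ℕ) : valk k u = Nat.ofDigits k u.reverse := by
  rw [valk, List.foldl_eq_foldr_reverse, Nat.ofDigits_eq_foldr]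
  simp [add_comm]

lemma valk_append (k : ℕ) (u w : List ℕ) :
    valk k (u ++ w) = valk k u * k ^ w.length + valk k w := by
  rw [valk_eq_ofDigits, valk_eq_ofDigits, valk_eq_ofDigits, List.reverse_append,
    Nat.ofDigits_append, List.length_reverse]
  ring

lemma deltaW_append {S : Type*} (δ : ℕ → S → S) (u w : List ℕ) :
    deltaW δ (u ++ w) = deltaW δ u ∘ deltaW δ w := by
  induction u with
  | nil => rfl
  | cons d t ih => simp only [List.cons_append, deltaW, ih, Function.comp_assoc]

lemma deltaW_replicate {S : Type*} (δ : ℕ → S → S) (d j : ℕ) :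
    deltaW δ (List.replicate j d) = (δ d)^[j] := by
  induction j with
  | zero => rfl
  | succ j ih => rw [List.replicate_succ, deltaW, ih, Function.iterate_succ']

lemma deltaW_wpow {S : Type*} (δ : ℕ → S → S) (v : List ℕ) (n : ℕ) :
    deltaW δ (wpow v n) = (deltaW δ v)^[n] := by
  induction n with
  | zero => rfl
  | succ n ih => rw [wpow, List.replicate_succ, List.flatten_cons, deltaW_append, ← wpow, ih,
      Function.iterate_succ']

def onesWord (B n : ℕ) : List ℕ := 1 :: wpow (List.replicate (B - 1) 0 ++ [1]) n

lemma valk_onesWord (k : ℕ) {B : ℕ} (hB : 1 ≤ B) (n : ℕ) :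
    valk k (onesWord B n) = repunit (k ^ B) (n + 1) := by
  induction n with
  | zero => simp [onesWord, wpow, valk, repunit]
  | succ n ih =>
    have hword : onesWord B (n + 1) = onesWord B n ++ (List.replicate (B - 1) 0 ++ [1]) := by
      simp [onesWord, wpow, List.replicate_succ']
    rw [hword, valk_append, ih, repunit_succ (k ^ B) (n + 1)]
    simp [valk_eq_ofDigits, Nat.ofDigits_cons, Nat.ofDigits_replicate_zero, Nat.sub_add_cancel hB,
      mul_comm]

lemma deltaW_onesWord {S : Type*} (δ : ℕ → S → S) (B n : ℕ) :
    deltaW δ (onesWord B n) = δ 1 ∘ ((δ 0)^[B - 1] ∘ δ 1)^[n] := by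
  rw [onesWord, deltaW, deltaW_wpow, deltaW_append, deltaW_replicate]
  rfl

lemma isWord_onesWord {k : ℕ} (hk : 2 ≤ k) (B n : ℕ) : IsWord k (onesWord B n) := by
  intro d hd
  simp only [onesWord, wpow, List.mem_cons, List.mem_flatten, List.mem_replicate] at hd
  grind

section Automaton

variable {k : ℕ} {a : ℕ → ℂ} {S : Type*} {s₀ : S} {δ : ℕ → S → S} {τ : S → ℂ}

lemma apply_repunit
    (hA : ∀ u, IsWord k u → NoLeadZero u → a (valk k u) = τ (deltaW δ u s₀))
    (hk : 2 ≤ k) {B : ℕ} (hB : 1 ≤ B) (n : ℕ) :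
    a (repunit (k ^ B) (n + 1)) = τ (δ 1 (((δ 0)^[B - 1] ∘ δ 1)^[n] s₀)) := by
  rw [← valk_onesWord k hB, hA _ (isWord_onesWord hk B n) one_ne_zero, deltaW_onesWord]
  rfl

lemma apply_repunit_eq_of_modEq_length [Fintype S]
    (hA : ∀ u, IsWord k u → NoLeadZero u → a (valk k u) = τ (deltaW δ u s₀))
    (hk : 2 ≤ k) {B n n' : ℕ} (hB : 1 ≤ B) (hn : Fintype.card S < n)
    (hn' : Fintype.card S < n')
    (h : n ≡ n' [MOD (Fintype.card S).factorial]) :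
    a (repunit (k ^ B) n) = a (repunit (k ^ B) n') := by
  obtain ⟨m, rfl⟩ : ∃ m, n = m + 1 := ⟨n - 1, by omega⟩
  obtain ⟨m', rfl⟩ : ∃ m', n' = m' + 1 := ⟨n' - 1, by omega⟩
  rw [apply_repunit hA hk hB, apply_repunit hA hk hB,
    Function.iterate_eq_iterate_of_modEq _ (by omega) (by omega) (Nat.ModEq.add_right_cancel' 1 h)]

lemma apply_repunit_eq_of_modEq_exponent [Fintype S]
    (hA : ∀ u, IsWord k u → NoLeadZero u → a (valk k u) = τ (deltaW δ u s₀))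
    (hk : 2 ≤ k) {B B' n : ℕ} (hn : 0 < n) (hB : Fintype.card S < B) (hB' : Fintype.card S < B')
    (h : B ≡ B' [MOD (Fintype.card S).factorial]) :
    a (repunit (k ^ B) n) = a (repunit (k ^ B') n) := by
  obtain ⟨m, rfl⟩ : ∃ m, n = m + 1 := ⟨n - 1, by omega⟩
  have h' : B - 1 ≡ B' - 1 [MOD (Fintype.card S).factorial] :=
    Nat.ModEq.add_right_cancel' 1 (by rwa [Nat.sub_add_cancel (by omega : 1 ≤ B),
      Nat.sub_add_cancel (by omega : 1 ≤ B')])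
  rw [apply_repunit hA hk (by omega), apply_repunit hA hk (by omega),
    Function.iterate_eq_iterate_of_modEq (δ 0) (by omega) (by omega) h']

lemma apply_repunit_prime_pow_succ [Fintype S]
    (hA : ∀ u, IsWord k u → NoLeadZero u → a (valk k u) = τ (deltaW δ u s₀))
    (hk : 2 ≤ k) (hmul : IsMult a) {p e β : ℕ} (hp : p.Prime)
    (hpS : (Fintype.card S).factorial < p) (he : 0 < e) (hkp : k ^ e ≡ 1 [MOD p]) (hβ : 0 < β) :
    a (repunit (k ^ e) (p ^ (β + 1))) =
      a (repunit (k ^ e) (p ^ β)) * a (repunit ((k ^ e) ^ p ^ β) p) := by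
  set T := (Fintype.card S).factorial
  have hSp : Fintype.card S < p := (Nat.self_le_factorial _).trans_lt hpS
  have hpβ : p ≤ p ^ β := Nat.le_self_pow hβ.ne' p
  set q := p ^ β + T
  have hpq : p ≤ q := by omega
  have hqT : q ≡ p ^ β [MOD T] := Nat.add_modEq_left_iff.2 dvd_rfl
  have hp_not_dvd_q : ¬ p ∣ q := fun h => Nat.not_dvd_of_pos_of_lt (Nat.factorial_pos _) hpS
    ((Nat.dvd_add_right (dvd_pow_self p hβ.ne')).1 h)
  have hcop : Nat.Coprime (repunit (k ^ e) q) (repunit ((k ^ e) ^ q) p) :=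
    coprime_repunit_pow dvd_rfl
      ((hp.coprime_iff_not_dvd).2 (by rwa [dvd_repunit_iff hkp])).symm
  calc a (repunit (k ^ e) (p ^ (β + 1))) = a (repunit (k ^ e) (q * p)) := by
        rw [pow_succ]
        exact apply_repunit_eq_of_modEq_length hA hk (by omega) (by nlinarith) (by nlinarith)
          (hqT.mul_right p).symm
    _ = a (repunit (k ^ e) q) * a (repunit ((k ^ e) ^ q) p) := by
        rw [repunit_mul]
        exact hmul _ _ (repunit_pos (by omega)) (repunit_pos hp.pos) hcop
    _ = a (repunit (k ^ e) (p ^ β)) * a (repunit ((k ^ e) ^ p ^ β) p) := by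
        rw [apply_repunit_eq_of_modEq_length hA hk (by omega) (by omega) (by omega) hqT,
          ← pow_mul, ← pow_mul, apply_repunit_eq_of_modEq_exponent hA hk hp.pos (by nlinarith)
          (by nlinarith) (hqT.mul_left e)]

end Automaton

/-- in the dense case, `a` is completely multiplicative at all
sufficiently large primes: `a(p^α) = a(p)^α ≠ 0`. -/
theorem stmt12 (k : ℕ) (hk : 2 ≤ k) (a : ℕ → ℂ)
    (ha : IsAutomatic k a) (hmul : IsMult a)
    (hdense : ∃ p₀ : ℕ, ∀ p : ℕ, p.Prime → p₀ ≤ p → ∀ α : ℕ, 0 < α → a (p ^ α) ≠ 0) :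
    ∃ p₂ : ℕ, ∀ p : ℕ, p.Prime → p₂ ≤ p → ∀ α : ℕ, 0 < α →
      a (p ^ α) = a p ^ α ∧ a (p ^ α) ≠ 0 := by
  obtain ⟨S, _, s₀, δ, τ, hA⟩ := ha
  obtain ⟨p₀, hdense⟩ := hdense
  refine ⟨p₀ + k + (Fintype.card S).factorial + 3, fun p hp hp₂ α hα =>
    ⟨?_, hdense p hp (by omega) α hα⟩⟩
  have h1 : a 1 ≠ 0 := fun h => hdense p hp (by omega) 1 one_pos
    (by simpa [h] using hmul p 1 hp.pos one_pos (Nat.coprime_one_right p))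
  have hkp : k ^ (p - 1) ≡ 1 [MOD p] := Nat.ModEq.pow_card_sub_one_eq_one hp
    (Nat.coprime_of_lt_prime (by omega) (by omega) hp).symm
  have hstep : ∀ β, 0 < β → a (p ^ (β + 1)) = a (p ^ β) * a p := fun β hβ =>
    hmul.apply_prime_pow_succ h1 hdense hp (hp.odd_of_ne_two (by omega)) (by omega) hkp
      (Nat.one_lt_pow (by omega) (by omega))
      (apply_repunit_prime_pow_succ hA hk hmul hp (by omega) (by omega) hkp hβ)
  induction α, hα using Nat.le_induction with
  | base => rw [pow_one, pow_one]
  | succ n hn ih => rw [hstep n hn, ih, pow_succ]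

end MultAuto
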